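/- If the burstiness curve bound satisfies g(S_max) ≤ K, then a bufferless K-server system with arrivals constrained by g and service times bounded by S_max never blocks: the number of simultaneously active jobs never exceeds K. -/
import Mathlib

/-- If `g Smax ≤ K` then a bufferless `K`-server system with
arrivals constrained by burstiness curve `g` and service times bounded by
`Smax` never blocks: the number of simultaneously active jobs never
exceeds `K`. -/
theorem no_blocking_of_burstiness_le_servers
    (g : ℝ → ℝ) (T : ℤ → ℝ) (S : ℤ → ℝ) (Smax : ℝ) (K : ℕ)
    (hSmax : 0 ≤ Smax)
    (hS : ∀ i, 0 ≤ S i ∧ S i ≤ Smax)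
    (hburst : ∀ s t : ℝ, s ≤ t →
      ∀ I : Finset ℤ, (∀ i ∈ I, s < T i ∧ T i ≤ t) → (I.card : ℝ) ≤ g (t - s))
    (hK : g Smax ≤ (K : ℝ)) :
    ∀ t : ℝ, ∀ I : Finset ℤ,
      (∀ i ∈ I, T i ≤ t ∧ t < T i + S i) → (I.card : ℝ) ≤ (K : ℝ) := by
  intro t I hI
  have h := hburst (t - Smax) t (by linarith) I (fun i hi => by
    obtain ⟨h1, h2⟩ := hI i hi
    obtain ⟨_, hs2⟩ := hS i
    exact ⟨by linarith, h1⟩)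
  have : t - (t - Smax) = Smax := by ring
  rw [this] at h
  linarith
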